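/- Let P be the orthogonal projection of ((ℂ²)^{⊗4})^{⊗N} onto the two-dimensional subspace spanned by |id⟩⟩^{⊗N} and |swap⟩⟩^{⊗N}. Then 2^N · Σ_{s∈{0,1}^N} ⟨(⊗_{i=1}^N |s_i s_i s_i s_i⟩) , P (|0000⟩^{⊗N})⟩ = 2/(1 + 2^{-N}). -/

import Mathlib

/-!
Both `|id⟩⟩^{⊗N}` and `|swap⟩⟩^{⊗N}` are unit product vectors whose overlap is `2^{-N}`
(a single site contributes `1/2`), and every diagonal basis vector `⊗_i |s_i s_i s_i s_i⟩` has
overlap `2^{-N}` with each of them. By the symmetry exchanging the two, the projection of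
`|0000⟩^{⊗N}` is `2^{-N}/(1 + 2^{-N}) · (|id⟩⟩^{⊗N} + |swap⟩⟩^{⊗N})`, so each of the `2^N`
terms of the sum equals `2 · 2^{-2N}/(1 + 2^{-N})`.
-/

open Matrix Finset

noncomputable section

/-- The single-site state |id⟩⟩ = ½(|0000⟩+|0011⟩+|1100⟩+|1111⟩) in (ℂ²)^{⊗4}. -/
def idS : (Fin 4 → Fin 2) → ℂ := fun f => if f 0 = f 1 ∧ f 2 = f 3 then 1 / 2 else 0

/-- The single-site state |swap⟩⟩ = ½(|0000⟩+|1001⟩+|0110⟩+|1111⟩) in (ℂ²)^{⊗4}. -/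
def swapS : (Fin 4 → Fin 2) → ℂ := fun f => if f 0 = f 3 ∧ f 1 = f 2 then 1 / 2 else 0

/-- Basis of ((ℂ²)^{⊗4})^{⊗N}. -/
abbrev RepIdx (N : ℕ) := Fin N → Fin 4 → Fin 2

/-- The product state |id⟩⟩^{⊗N}. -/
def idN (N : ℕ) : RepIdx N → ℂ := fun f => ∏ i : Fin N, idS (f i)

/-- The product state |swap⟩⟩^{⊗N}. -/
def swapN (N : ℕ) : RepIdx N → ℂ := fun f => ∏ i : Fin N, swapS (f i)

/-- The product basis vector `⊗_{i} |s_i s_i s_i s_i⟩` associated to a bitstring `s`,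
as an element of the Euclidean (ℓ²) space on the replica basis. -/
def diagBasis (N : ℕ) (s : Fin N → Fin 2) : EuclideanSpace ℂ (RepIdx N) :=
  WithLp.toLp 2 (fun f => if f = (fun i _ => s i) then 1 else 0)

/-- The two-dimensional subspace spanned by `|id⟩⟩^{⊗N}` and `|swap⟩⟩^{⊗N}`. -/
def grSpan (N : ℕ) : Submodule ℂ (EuclideanSpace ℂ (RepIdx N)) :=
  Submodule.span ℂ {(WithLp.toLp 2 (idN N) : EuclideanSpace ℂ (RepIdx N)), (WithLp.toLp 2 (swapN N) : EuclideanSpace ℂ (RepIdx N))}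

open scoped InnerProductSpace ComplexConjugate

section
variable {𝕜 E : Type*} [RCLike 𝕜] [NormedAddCommGroup E] [InnerProductSpace 𝕜 E]

theorem starProjection_span_pair_eq_smul_add {u v x : E} {c b : 𝕜}
    [(Submodule.span 𝕜 {u, v}).HasOrthogonalProjection]
    (hu : ⟪u, u⟫_𝕜 = 1) (hv : ⟪v, v⟫_𝕜 = 1) (huv : ⟪u, v⟫_𝕜 = c) (hvu : ⟪v, u⟫_𝕜 = c)
    (hxu : ⟪u, x⟫_𝕜 = b) (hxv : ⟪v, x⟫_𝕜 = b) (hc : 1 + c ≠ 0) :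
    (Submodule.span 𝕜 {u, v}).starProjection x = (b / (1 + c)) • (u + v) := by
  refine Submodule.eq_starProjection_of_mem_orthogonal ?_ ?_
  · exact Submodule.smul_mem _ _
      (Submodule.add_mem _ (Submodule.subset_span (by simp)) (Submodule.subset_span (by simp)))
  · have hu' : ⟪u, x - (b / (1 + c)) • (u + v)⟫_𝕜 = 0 := by
      rw [inner_sub_right, inner_smul_right, inner_add_right, hu, huv, hxu]; field_simp; ring
    have hv' : ⟪v, x - (b / (1 + c)) • (u + v)⟫_𝕜 = 0 := by
      rw [inner_sub_right, inner_smul_right, inner_add_right, hv, hvu, hxv]; field_simp; ring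
    rw [Submodule.mem_orthogonal]
    intro w hw
    obtain ⟨a, a', rfl⟩ := Submodule.mem_span_pair.1 hw
    rw [inner_add_left, inner_smul_left, inner_smul_left, hu', hv', mul_zero, mul_zero, add_zero]

end

section
variable {𝕜 : Type*} [RCLike 𝕜] {α : Type*}

theorem inner_halfIndicator [Fintype α] (p q : α → Prop) [DecidablePred p] [DecidablePred q] :
    ⟪(WithLp.toLp 2 fun x => if p x then (1 / 2 : 𝕜) else 0 : EuclideanSpace 𝕜 α),
      WithLp.toLp 2 fun x => if q x then (1 / 2 : 𝕜) else 0⟫_𝕜 =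
      #{x | p x ∧ q x} / 4 := by
  have hterm : ∀ x, (if q x then (1 / 2 : 𝕜) else 0) * conj (if p x then (1 / 2 : 𝕜) else 0) =
      if p x ∧ q x then 1 / 4 else 0 := by
    intro x
    split_ifs <;> simp_all [map_ofNat]
    norm_num
  simp only [PiLp.inner_apply, RCLike.inner_apply, hterm]
  rw [← sum_filter, sum_const, nsmul_eq_mul]
  ring

variable {ι : Type*} [Fintype ι]

def productState (g : α → 𝕜) : EuclideanSpace 𝕜 (ι → α) :=
  WithLp.toLp 2 fun f => ∏ i, g (f i)

theorem productState_apply (g : α → 𝕜) (f : ι → α) : productState g f = ∏ i, g (f i) := rfl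

theorem inner_productState [DecidableEq ι] [Fintype α] (g h : α → 𝕜) :
    ⟪(productState g : EuclideanSpace 𝕜 (ι → α)), productState h⟫_𝕜 =
      ⟪(WithLp.toLp 2 g : EuclideanSpace 𝕜 α), WithLp.toLp 2 h⟫_𝕜 ^ Fintype.card ι := by
  simp only [PiLp.inner_apply, RCLike.inner_apply, productState_apply, map_prod,
    ← prod_mul_distrib]
  rw [← Fintype.prod_sum (fun _ x => h x * conj (g x)), prod_const, card_univ]

end

theorem inner_idS_idS :
    ⟪(WithLp.toLp 2 idS : EuclideanSpace ℂ (Fin 4 → Fin 2)), WithLp.toLp 2 idS⟫_ℂ = 1 := by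
  unfold idS
  rw [inner_halfIndicator, div_eq_iff (by norm_num)]
  norm_cast

theorem inner_idS_swapS :
    ⟪(WithLp.toLp 2 idS : EuclideanSpace ℂ (Fin 4 → Fin 2)), WithLp.toLp 2 swapS⟫_ℂ = 1 / 2 := by
  unfold idS swapS
  rw [inner_halfIndicator, div_eq_div_iff (by norm_num) two_ne_zero]
  norm_cast

theorem inner_swapS_idS :
    ⟪(WithLp.toLp 2 swapS : EuclideanSpace ℂ (Fin 4 → Fin 2)), WithLp.toLp 2 idS⟫_ℂ = 1 / 2 := by
  unfold idS swapS
  rw [inner_halfIndicator, div_eq_div_iff (by norm_num) two_ne_zero]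
  norm_cast

theorem inner_swapS_swapS :
    ⟪(WithLp.toLp 2 swapS : EuclideanSpace ℂ (Fin 4 → Fin 2)), WithLp.toLp 2 swapS⟫_ℂ = 1 := by
  unfold swapS
  rw [inner_halfIndicator, div_eq_iff (by norm_num)]
  norm_cast

theorem idS_const (a : Fin 2) : idS (fun _ => a) = 1 / 2 := by simp [idS]

theorem swapS_const (a : Fin 2) : swapS (fun _ => a) = 1 / 2 := by simp [swapS]

theorem diagBasis_eq_single (N : ℕ) (s : Fin N → Fin 2) :
    diagBasis N s = EuclideanSpace.single (fun i _ => s i) 1 := by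
  ext f
  simp [diagBasis]

theorem inner_diagBasis_productState {N : ℕ} {g : (Fin 4 → Fin 2) → ℂ}
    (hg : ∀ a, g (fun _ => a) = 1 / 2) (s : Fin N → Fin 2) :
    ⟪diagBasis N s, productState g⟫_ℂ = 2 ^ (-(N : ℤ)) := by
  simp [diagBasis_eq_single, EuclideanSpace.inner_single_left, productState_apply, hg]

theorem starProjection_grSpan_diagBasis (N : ℕ) :
    (grSpan N).starProjection (diagBasis N fun _ => 0) =
      ((2 : ℂ) ^ (-(N : ℤ)) / (1 + 2 ^ (-(N : ℤ)))) • (productState idS + productState swapS) := by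
  have hc : (1 : ℂ) + 2 ^ (-(N : ℤ)) ≠ 0 := by
    simpa using Complex.ofReal_ne_zero.2 (by positivity : (1 + 2 ^ (-(N : ℤ)) : ℝ) ≠ 0)
  exact starProjection_span_pair_eq_smul_add (u := productState idS) (v := productState swapS)
    (by rw [inner_productState, inner_idS_idS, one_pow])
    (by rw [inner_productState, inner_swapS_swapS, one_pow])
    (by rw [inner_productState, inner_idS_swapS]; simp)
    (by rw [inner_productState, inner_swapS_idS]; simp)
    (by rw [← inner_conj_symm, inner_diagBasis_productState idS_const]; simp [map_ofNat])
    (by rw [← inner_conj_symm, inner_diagBasis_productState swapS_const]; simp [map_ofNat]) hc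

/-- with `P` the orthogonal projection onto `span{|id⟩⟩^{⊗N}, |swap⟩⟩^{⊗N}}`,
`2^N · Σ_{s∈{0,1}^N} ⟨(⊗_i |s_i s_i s_i s_i⟩), P(|0000⟩^{⊗N})⟩ = 2/(1 + 2^{-N})`. -/
theorem stmt8 (N : ℕ) :
    (2 : ℂ) ^ N *
      ∑ s : Fin N → Fin 2,
        inner (𝕜 := ℂ) (diagBasis N s)
          ((Submodule.orthogonalProjectionOnto (grSpan N) (diagBasis N (fun _ => 0)) :
            EuclideanSpace ℂ (RepIdx N))) =
    2 / (1 + (2 : ℂ) ^ (-(N : ℤ))) := by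
  set c : ℂ := 2 ^ (-(N : ℤ))
  have hterm (s : Fin N → Fin 2) :
      ⟪diagBasis N s, ((grSpan N).orthogonalProjectionOnto (diagBasis N fun _ => 0) : _)⟫_ℂ =
        c / (1 + c) * (c + c) := by
    rw [Submodule.coe_orthogonalProjectionOnto_apply, starProjection_grSpan_diagBasis,
      inner_smul_right, inner_add_right, inner_diagBasis_productState idS_const,
      inner_diagBasis_productState swapS_const]
  have hc : (2 : ℂ) ^ N * c = 1 := by simp [c, _root_.zpow_neg]
  simp only [hterm, sum_const, card_univ, Fintype.card_fun, Fintype.card_fin,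
    nsmul_eq_mul]
  calc _ = ((2 : ℂ) ^ N * c) ^ 2 * (2 / (1 + c)) := by push_cast; ring
    _ = 2 / (1 + c) := by rw [hc, one_pow, one_mul]

end
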